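/- If u^{(l)} is an optimal list of length l and u^{(l+1)} is an optimal list of length l+1 (under the topic structure assumption, with distinct click-through rates within each topic), then whenever some item k of topic m lies in u^{(l)} but not in u^{(l+1)}, no item k' ≠ k of topic m can lie in u^{(l+1)} but not in u^{(l)}. (Fact 1 in the paper: between consecutive optimal lists, one cannot swap an item for another item of the same topic.) -/

import Mathlib

/-!
The reward of a list telescopes to `∑ m, φ m * (1 - ∏ i, (1 - θ (u i) m))`, so replacing one item
of the list by an item that is not yet in it and dominates it in every topic strictly increases the
reward. Under the topic structure two items of the same topic are compared only through their
click-through rates in that topic, which are distinct. If `k ∈ u⁽ˡ⁾ \ u⁽ˡ⁺¹⁾` and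
`k' ∈ u⁽ˡ⁺¹⁾ \ u⁽ˡ⁾` shared a topic, then swapping `k` for `k'` in `u⁽ˡ⁾` or `k'` for `k` in
`u⁽ˡ⁺¹⁾`, whichever is the better item, would improve an optimal list.
-/

open Finset

theorem Function.Injective.update_of_forall_ne {α β : Type*} [DecidableEq α] {f : α → β}
    (hf : Function.Injective f) (i : α) {b : β} (hb : ∀ j, f j ≠ b) :
    Function.Injective (Function.update f i b) := by
  intro x y hxy
  simp only [Function.update_apply] at hxy
  split_ifs at hxy with hx hy hy
  · exact hx.trans hy.symm
  · exact absurd hxy.symm (hb y)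
  · exact absurd hxy (hb x)
  · exact hf hxy

theorem Fin.sum_mul_prod_Iio_one_sub {R : Type*} [CommRing R] {n : ℕ} (g : Fin n → R) :
    ∑ i, g i * ∏ s ∈ Iio i, (1 - g s) = 1 - ∏ i, (1 - g i) := by
  rw [prod_one_sub_ordered, sub_sub_cancel]
  simp only [filter_gt_eq_Iio]

theorem Finset.prod_one_sub_sub_prod_one_sub_update {R α : Type*} [CommRing R] [Fintype α]
    [DecidableEq α] (f : α → R) (i : α) (x : R) :
    ∏ j, (1 - f j) - ∏ j, (1 - Function.update f i x j) =
      (x - f i) * ∏ j ∈ univ.erase i, (1 - f j) := by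
  have hrest : ∏ j ∈ univ.erase i, (1 - Function.update f i x j) = ∏ j ∈ univ.erase i, (1 - f j) :=
    prod_congr rfl fun j hj => by rw [Function.update_of_ne (ne_of_mem_erase hj)]
  rw [← mul_prod_erase univ _ (mem_univ i), ← mul_prod_erase univ _ (mem_univ i), hrest,
    Function.update_self]
  ring

section Cascade

variable {M ι : Type*} [Fintype M] (φ : M → ℝ) (θ : ι → M → ℝ)

def cascadeReward {n : ℕ} (u : Fin n → ι) : ℝ :=
  ∑ m, φ m * ∑ i, θ (u i) m * ∏ s ∈ Iio i, (1 - θ (u s) m)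

theorem cascadeReward_eq {n : ℕ} (u : Fin n → ι) :
    cascadeReward φ θ u = ∑ m, φ m * (1 - ∏ i, (1 - θ (u i) m)) := by
  simp only [cascadeReward, Fin.sum_mul_prod_Iio_one_sub]

theorem cascadeReward_update_sub [DecidableEq ι] {n : ℕ} (u : Fin n → ι) (i : Fin n) (a : ι) :
    cascadeReward φ θ (Function.update u i a) - cascadeReward φ θ u =
      ∑ m, φ m * ((θ a m - θ (u i) m) * ∏ j ∈ univ.erase i, (1 - θ (u j) m)) := by
  simp only [cascadeReward_eq, ← sum_sub_distrib, ← mul_sub, sub_sub_sub_cancel_left]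
  refine sum_congr rfl fun m _ => ?_
  rw [← Finset.prod_one_sub_sub_prod_one_sub_update (fun j => θ (u j) m) i (θ a m)]
  simp only [Function.apply_update (fun _ b => θ b m)]

variable {φ θ}

theorem cascadeReward_lt_update [DecidableEq ι] {n : ℕ} {u : Fin n → ι} {i : Fin n} {a : ι}
    (hφ : ∀ m, 0 ≤ φ m) (hθ1 : ∀ j m, θ (u j) m < 1) (hle : ∀ m, θ (u i) m ≤ θ a m)
    {m₀ : M} (hφm₀ : 0 < φ m₀) (hlt : θ (u i) m₀ < θ a m₀) :
    cascadeReward φ θ u < cascadeReward φ θ (Function.update u i a) := by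
  have hpos : ∀ m, 0 < ∏ j ∈ univ.erase i, (1 - θ (u j) m) := fun m =>
    prod_pos fun j _ => sub_pos.mpr (hθ1 j m)
  rw [← sub_pos, cascadeReward_update_sub]
  refine sum_pos' (fun m _ => ?_) ⟨m₀, mem_univ _, ?_⟩
  · exact mul_nonneg (hφ m) (mul_nonneg (sub_nonneg.mpr (hle m)) (hpos m).le)
  · exact mul_pos hφm₀ (mul_pos (sub_pos.mpr hlt) (hpos m₀))

theorem exists_cascadeReward_lt_of_same_topic {h : ι → M}
    (hθtopic : ∀ a m, m ≠ h a → θ a m = 0) (hφ : ∀ m, 0 < φ m) (hθ1 : ∀ a m, θ a m < 1)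
    {n : ℕ} {u : Fin n → ι} (hinj : Function.Injective u) {i : Fin n} {a b : ι}
    (hb : u i = b) (ha : ∀ j, u j ≠ a) (htopic : h b = h a)
    (hlt : θ b (h a) < θ a (h a)) :
    ∃ v : Fin n → ι, Function.Injective v ∧ cascadeReward φ θ u < cascadeReward φ θ v := by
  classical
  subst hb
  have hle : ∀ m, θ (u i) m ≤ θ a m := fun m => by
    rcases eq_or_ne m (h a) with rfl | hm
    · exact hlt.le
    · rw [hθtopic a m hm, hθtopic (u i) m (htopic ▸ hm)]
  exact ⟨_, hinj.update_of_forall_ne i ha,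
    cascadeReward_lt_update (fun m => (hφ m).le) (fun j => hθ1 (u j)) hle (hφ (h a)) hlt⟩

end Cascade

theorem no_same_topic_swap_between_consecutive_optima_general {M ι : Type*} [Fintype M]
    (φ : M → ℝ) (θ : ι → M → ℝ) (h : ι → M)
    (hθtopic : ∀ a m, m ≠ h a → θ a m = 0)
    (hφ : ∀ m, 0 < φ m) (hθ1 : ∀ a m, θ a m < 1)
    (hdistinct : ∀ a b : ι, a ≠ b → h a = h b → θ a (h a) ≠ θ b (h b))
    (l : ℕ)
    (u1 : Fin l → ι) (hinj1 : Function.Injective u1)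
    (u2 : Fin (l + 1) → ι) (hinj2 : Function.Injective u2)
    (hopt1 : ∀ v : Fin l → ι, Function.Injective v →
      (∑ m, φ m * ∑ i, θ (v i) m * ∏ s ∈ Finset.Iio i, (1 - θ (v s) m))
        ≤ ∑ m, φ m * ∑ i, θ (u1 i) m * ∏ s ∈ Finset.Iio i, (1 - θ (u1 s) m))
    (hopt2 : ∀ v : Fin (l + 1) → ι, Function.Injective v →
      (∑ m, φ m * ∑ i, θ (v i) m * ∏ s ∈ Finset.Iio i, (1 - θ (v s) m))
        ≤ ∑ m, φ m * ∑ i, θ (u2 i) m * ∏ s ∈ Finset.Iio i, (1 - θ (u2 s) m))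
    (k k' : ι) (hkk' : k ≠ k') (htopic : h k' = h k)
    (hk : (∃ i, u1 i = k) ∧ (∀ i, u2 i ≠ k)) :
    ¬ ((∃ i, u2 i = k') ∧ (∀ i, u1 i ≠ k')) := by
  rintro ⟨⟨i2, hi2⟩, hk'u1⟩
  obtain ⟨⟨i1, hi1⟩, hku2⟩ := hk
  rcases lt_trichotomy (θ k (h k)) (θ k' (h k')) with hlt | heq | hgt
  · rw [← htopic] at hlt
    obtain ⟨v, hv, hgain⟩ :=
      exists_cascadeReward_lt_of_same_topic hθtopic hφ hθ1 hinj1 hi1 hk'u1 htopic.symm hlt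
    exact (hopt1 v hv).not_gt hgain
  · exact hdistinct k k' hkk' htopic.symm heq
  · rw [htopic] at hgt
    obtain ⟨v, hv, hgain⟩ :=
      exists_cascadeReward_lt_of_same_topic hθtopic hφ hθ1 hinj2 hi2 hku2 htopic hgt
    exact (hopt2 v hv).not_gt hgain

/-- Fact 1: between optimal lists of consecutive lengths, one cannot
swap an item for another item of the same topic. -/
theorem no_same_topic_swap_between_consecutive_optima {M ι : Type*} [Fintype M] [Fintype ι]
    (φ : M → ℝ) (θ : ι → M → ℝ) (h : ι → M)
    (hθtopic : ∀ a m, m ≠ h a → θ a m = 0)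
    (hφ : ∀ m, 0 < φ m) (hθ0 : ∀ a m, 0 ≤ θ a m) (hθ1 : ∀ a m, θ a m < 1)
    (hdistinct : ∀ a b : ι, a ≠ b → h a = h b → θ a (h a) ≠ θ b (h b))
    (l : ℕ)
    (u1 : Fin l → ι) (hinj1 : Function.Injective u1)
    (u2 : Fin (l + 1) → ι) (hinj2 : Function.Injective u2)
    (hopt1 : ∀ v : Fin l → ι, Function.Injective v →
      (∑ m, φ m * ∑ i, θ (v i) m * ∏ s ∈ Finset.Iio i, (1 - θ (v s) m))
        ≤ ∑ m, φ m * ∑ i, θ (u1 i) m * ∏ s ∈ Finset.Iio i, (1 - θ (u1 s) m))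
    (hopt2 : ∀ v : Fin (l + 1) → ι, Function.Injective v →
      (∑ m, φ m * ∑ i, θ (v i) m * ∏ s ∈ Finset.Iio i, (1 - θ (v s) m))
        ≤ ∑ m, φ m * ∑ i, θ (u2 i) m * ∏ s ∈ Finset.Iio i, (1 - θ (u2 s) m))
    (k k' : ι) (hkk' : k ≠ k') (htopic : h k' = h k)
    (hk : (∃ i, u1 i = k) ∧ (∀ i, u2 i ≠ k)) :
    ¬ ((∃ i, u2 i = k') ∧ (∀ i, u1 i ≠ k')) :=
  no_same_topic_swap_between_consecutive_optima_general φ θ h hθtopic hφ hθ1 hdistinct l u1 hinj1 u2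
    hinj2 hopt1 hopt2 k k' hkk' htopic hk
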